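/- arXiv:1910.13566 — 2 statements merged into one kernel-verified Lean document; each statement's English description precedes it below -/
import Mathlib

section
/- Let μ and ν be probability measures on ℝ, let d(μ,ν) denote the Dudley (bounded-Lipschitz) distance d(μ,ν) = sup{ |∫ f d(μ−ν)| : Lip(f) + ‖f‖_∞ ≤ 1 }, and let d_L(μ,ν) = inf{ ε > 0 : μ(A) ≤ ν(A^ε) + ε for all Borel A } denote the Lévy(-Prokhorov) distance. Then (1/2) d(μ,ν) ≤ d_L(μ,ν) ≤ 2 √(d(μ,ν)). -/
open MeasureTheory Metric Set

section Aux

lemma aux_int {μ : Measure ℝ} [IsFiniteMeasure μ] {f : ℝ → ℝ} (hf : Continuous f)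
    {C : ℝ} (hC : ∀ x, |f x| ≤ C) : Integrable f μ :=
  (integrable_const C).mono' hf.aestronglyMeasurable (ae_of_all _ fun x => by
    simpa [Real.norm_eq_abs] using hC x)

lemma aux_abs_int {μ : Measure ℝ} [IsProbabilityMeasure μ] {f : ℝ → ℝ}
    {C : ℝ} (hC : ∀ x, |f x| ≤ C) : |∫ x, f x ∂μ| ≤ C := by
  have := norm_integral_le_of_norm_le_const (μ := μ) (f := f) (C := C)
    (ae_of_all _ fun x => by simpa [Real.norm_eq_abs] using hC x)
  simpa [Real.norm_eq_abs] using this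

lemma meas_int (ρ : Measure ℝ) [IsFiniteMeasure ρ] (g : ℝ → ℝ) (c a b : ℝ) :
    IntegrableOn (fun t => (ρ {x | t - c ≤ g x}).toReal) (Ioc a b) := by
  apply Measure.integrableOn_of_bounded (M := (ρ univ).toReal) measure_Ioc_lt_top.ne
  · refine (Measurable.ennreal_toReal (Antitone.measurable ?_)).aestronglyMeasurable
    refine fun s t hst => measure_mono (fun x h => ?_)
    simp only [mem_setOf_eq] at h ⊢; linarith
  · refine ae_of_all _ fun t => ?_
    simp only [Real.norm_eq_abs, ENNReal.abs_toReal]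
    exact ENNReal.toReal_mono (measure_ne_top _ _) (measure_mono (subset_univ _))

lemma oneSided (μ ν : Measure ℝ) [IsProbabilityMeasure μ] [IsProbabilityMeasure ν]
    {ε : ℝ} (hε0 : 0 < ε)
    (hε : ∀ A : Set ℝ, MeasurableSet A → μ A ≤ ν (thickening ε A) + ENNReal.ofReal ε)
    (f : ℝ → ℝ) (K C : NNReal) (hK : LipschitzWith K f) (hC : ∀ x, |f x| ≤ C) :
    ∫ x, f x ∂μ - ∫ x, f x ∂ν ≤ ((K : ℝ) + 2 * C) * ε := by
  set g : ℝ → ℝ := fun x => f x + C with hg_def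
  have hg_cont : Continuous g := hK.continuous.add continuous_const
  have hg_nn : ∀ x, 0 ≤ g x := fun x => by have := (abs_le.mp (hC x)).1; simp [hg_def]; linarith
  have hg_le : ∀ x, g x ≤ 2 * C := fun x => by
    have := (abs_le.mp (hC x)).2; simp [hg_def]; linarith
  have hg_abs : ∀ x, |g x| ≤ 2 * C := fun x => abs_le.mpr ⟨by linarith [hg_nn x, hg_le x], hg_le x⟩
  have intgμ : Integrable g μ := (integrable_const (2 * (C:ℝ))).mono'
    hg_cont.aestronglyMeasurable (ae_of_all _ fun x => by simpa [Real.norm_eq_abs] using hg_abs x)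
  have intgν : Integrable g ν := (integrable_const (2 * (C:ℝ))).mono'
    hg_cont.aestronglyMeasurable (ae_of_all _ fun x => by simpa [Real.norm_eq_abs] using hg_abs x)
  set M : ℝ := 2 * C with hM_def
  have hM : (0:ℝ) ≤ M := by positivity
  have layerμ : ∫ x, g x ∂μ = ∫ t in Ioc 0 M, (μ {a | t ≤ g a}).toReal :=
    intgμ.integral_eq_integral_Ioc_meas_le (ae_of_all _ hg_nn) (ae_of_all _ hg_le)
  have layerν : ∫ x, g x ∂ν = ∫ t in Ioc 0 M, (ν {a | t ≤ g a}).toReal :=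
    intgν.integral_eq_integral_Ioc_meas_le (ae_of_all _ hg_nn) (ae_of_all _ hg_le)
  set c : ℝ := (K : ℝ) * ε with hc_def
  have hc0 : 0 ≤ c := by positivity
  set G : ℝ → ℝ := fun t => (ν {a | t ≤ g a}).toReal with hG_def
  have hG_nn : ∀ t, 0 ≤ G t := fun t => ENNReal.toReal_nonneg
  have hG_le1 : ∀ t, G t ≤ 1 := fun t => by
    have : ν {a | t ≤ g a} ≤ 1 := prob_le_one
    simpa [hG_def] using ENNReal.toReal_mono ENNReal.one_ne_top this
  have step2 : ∀ t, (μ {a | t ≤ g a}).toReal ≤ G (t - c) + ε := by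
    intro t
    have hA : MeasurableSet {a | t ≤ g a} := measurableSet_le measurable_const hg_cont.measurable
    have hsub : thickening ε {a | t ≤ g a} ⊆ {a | t - c ≤ g a} := by
      intro x hx
      rcases mem_thickening_iff.mp hx with ⟨y, hy, hxy⟩
      simp only [mem_setOf_eq] at hy ⊢
      have h1 : g y - g x ≤ (K:ℝ) * dist y x := by
        have := hK.dist_le_mul y x
        have h2 : g y - g x ≤ |f y - f x| := by
          simp only [hg_def]; rw [add_sub_add_right_eq_sub]; exact le_abs_self _
        calc g y - g x ≤ |f y - f x| := h2
          _ = dist (f y) (f x) := (Real.dist_eq _ _).symm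
          _ ≤ (K:ℝ) * dist y x := this
      have h3 : (K:ℝ) * dist y x ≤ c := by
        rw [hc_def]
        exact mul_le_mul_of_nonneg_left (by rw [dist_comm]; exact hxy.le) K.2
      linarith
    have h2 : μ {a | t ≤ g a} ≤ ν {a | t - c ≤ g a} + ENNReal.ofReal ε :=
      (hε _ hA).trans (add_le_add_left (measure_mono hsub) _)
    have h3 := ENNReal.toReal_mono (by finiteness) h2
    rwa [ENNReal.toReal_add (measure_ne_top ν _) ENNReal.ofReal_ne_top,
      ENNReal.toReal_ofReal hε0.le] at h3
  have intF : IntegrableOn (fun t => (μ {a | t ≤ g a}).toReal) (Ioc 0 M) := by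
    have := meas_int μ g 0 0 M
    simpa using this
  have intH : IntegrableOn (fun t => G (t - c)) (Ioc 0 M) := meas_int ν g c 0 M
  have intG : IntegrableOn G (Ioc (-c) M) := by
    have := meas_int ν g 0 (-c) M
    simpa using this
  have key : ∫ x, g x ∂μ ≤ ∫ x, g x ∂ν + c + ε * M := by
    rw [layerμ, layerν]
    have step4 : ∫ t in Ioc 0 M, (μ {a | t ≤ g a}).toReal
        ≤ ∫ t in Ioc 0 M, (G (t - c) + ε) := by
      apply setIntegral_mono intF (intH.add (integrable_const ε)) step2
    have step4b : ∫ t in Ioc 0 M, (G (t - c) + ε)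
        = (∫ t in Ioc 0 M, G (t - c)) + ε * M := by
      rw [integral_add intH (integrable_const ε)]
      simp [Real.volume_Ioc, hM, mul_comm]
    have shift : ∫ t in Ioc 0 M, G (t - c) = ∫ t in Ioc (-c) (M - c), G t := by
      rw [← intervalIntegral.integral_of_le hM,
        ← intervalIntegral.integral_of_le (by linarith : -c ≤ M - c)]
      have := intervalIntegral.integral_comp_sub_right (a := 0) (b := M) G c
      simpa using this
    have mono : ∫ t in Ioc (-c) (M - c), G t ≤ ∫ t in Ioc (-c) M, G t := by
      apply setIntegral_mono_set intG (ae_of_all _ hG_nn)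
      exact (Ioc_subset_Ioc_right (by linarith)).eventuallyLE
    have split : ∫ t in Ioc (-c) M, G t
        = (∫ t in Ioc (-c) 0, G t) + ∫ t in Ioc 0 M, G t := by
      rw [← Ioc_union_Ioc_eq_Ioc (by linarith : -c ≤ 0) hM,
        setIntegral_union (Ioc_disjoint_Ioc_of_le le_rfl) measurableSet_Ioc
          (intG.mono_set (Ioc_subset_Ioc_right hM)) (intG.mono_set (Ioc_subset_Ioc_left (by linarith)))]
    have small : ∫ t in Ioc (-c) 0, G t ≤ c := by
      have h1 : ∫ t in Ioc (-c) 0, G t ≤ ∫ t in Ioc (-c) 0, (1:ℝ) := by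
        apply setIntegral_mono (intG.mono_set (Ioc_subset_Ioc_right hM)) (integrable_const 1) hG_le1
      have h2 : ∫ t in Ioc (-c) 0, (1:ℝ) = c := by
        simp [Real.volume_Ioc, hc0]
      linarith
    calc ∫ t in Ioc 0 M, (μ {a | t ≤ g a}).toReal
        ≤ (∫ t in Ioc 0 M, G (t - c)) + ε * M := by rw [← step4b]; exact step4
      _ = (∫ t in Ioc (-c) (M - c), G t) + ε * M := by rw [shift]
      _ ≤ (∫ t in Ioc (-c) M, G t) + ε * M := by linarith
      _ = (∫ t in Ioc (-c) 0, G t) + (∫ t in Ioc 0 M, G t) + ε * M := by rw [split]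
      _ ≤ (∫ t in Ioc 0 M, G t) + c + ε * M := by linarith
  have intfμ : Integrable f μ := aux_int hK.continuous hC
  have intfν : Integrable f ν := aux_int hK.continuous hC
  have hμg : ∫ x, g x ∂μ = (∫ x, f x ∂μ) + C := by
    rw [hg_def]; rw [integral_add intfμ (integrable_const _)]; simp
  have hνg : ∫ x, g x ∂ν = (∫ x, f x ∂ν) + C := by
    rw [hg_def]; rw [integral_add intfν (integrable_const _)]; simp
  rw [hμg, hνg] at key
  have : ε * M = 2 * C * ε := by rw [hM_def]; ring
  nlinarith [key]

lemma levy_symm (μ ν : Measure ℝ) [IsProbabilityMeasure μ] [IsProbabilityMeasure ν]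
    {ε : ℝ} (hε0 : 0 < ε)
    (hε : ∀ A : Set ℝ, MeasurableSet A → μ A ≤ ν (thickening ε A) + ENNReal.ofReal ε) :
    ∀ A : Set ℝ, MeasurableSet A → ν A ≤ μ (thickening ε A) + ENNReal.ofReal ε := by
  intro A hA
  set T := thickening ε A with hT_def
  have hT : MeasurableSet T := isOpen_thickening.measurableSet
  have key := hε Tᶜ hT.compl
  have hsub : thickening ε Tᶜ ⊆ Aᶜ := by
    intro x hx hxA
    rcases mem_thickening_iff.mp hx with ⟨y, hy, hxy⟩
    exact hy (mem_thickening_iff.mpr ⟨x, hxA, by rwa [dist_comm]⟩)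
  have key2 : μ Tᶜ ≤ ν Aᶜ + ENNReal.ofReal ε :=
    key.trans (add_le_add_left (measure_mono hsub) _)
  have hcompl : ∀ (ρ : Measure ℝ) [IsProbabilityMeasure ρ] (S : Set ℝ), MeasurableSet S →
      (ρ Sᶜ).toReal = 1 - (ρ S).toReal := by
    intro ρ _ S hS
    rw [measure_compl hS (measure_ne_top _ _),
      ENNReal.toReal_sub_of_le (measure_mono (subset_univ _)) (measure_ne_top _ _)]
    simp
  have hreal := ENNReal.toReal_mono (by finiteness) key2
  rw [ENNReal.toReal_add (measure_ne_top ν _) ENNReal.ofReal_ne_top,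
    ENNReal.toReal_ofReal hε0.le, hcompl μ T hT, hcompl ν A hA] at hreal
  calc ν A = ENNReal.ofReal (ν A).toReal := (ENNReal.ofReal_toReal (measure_ne_top _ _)).symm
    _ ≤ ENNReal.ofReal ((μ T).toReal + ε) := ENNReal.ofReal_le_ofReal (by linarith)
    _ = ENNReal.ofReal (μ T).toReal + ENNReal.ofReal ε :=
        ENNReal.ofReal_add ENNReal.toReal_nonneg hε0.le
    _ = μ T + ENNReal.ofReal ε := by rw [ENNReal.ofReal_toReal (measure_ne_top _ _)]

lemma toENN {μ ν : Measure ℝ} [IsProbabilityMeasure μ] [IsProbabilityMeasure ν]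
    {ε : ℝ} (hε0 : 0 < ε) {A T : Set ℝ}
    (h : (μ A).toReal ≤ (ν T).toReal + ε) : μ A ≤ ν T + ENNReal.ofReal ε := by
  calc μ A = ENNReal.ofReal (μ A).toReal := (ENNReal.ofReal_toReal (measure_ne_top _ _)).symm
    _ ≤ ENNReal.ofReal ((ν T).toReal + ε) := ENNReal.ofReal_le_ofReal h
    _ = ENNReal.ofReal (ν T).toReal + ENNReal.ofReal ε :=
        ENNReal.ofReal_add ENNReal.toReal_nonneg hε0.le
    _ = ν T + ENNReal.ofReal ε := by rw [ENNReal.ofReal_toReal (measure_ne_top _ _)]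

end Aux

/-- The Dudley (bounded-Lipschitz) distance between two measures on ℝ:
the supremum of `|∫ f dμ − ∫ f dν|` over test functions `f` with
`Lip(f) + ‖f‖_∞ ≤ 1`. -/
noncomputable def dudleyDist (μ ν : Measure ℝ) : ℝ :=
  sSup {r : ℝ | ∃ (f : ℝ → ℝ) (L C : NNReal),
    LipschitzWith L f ∧ (∀ x, |f x| ≤ C) ∧ (L : ℝ) + (C : ℝ) ≤ 1 ∧
    r = |∫ x, f x ∂μ - ∫ x, f x ∂ν|}

/-- The (one-sided) Lévy–Prokhorov distance:
`inf { ε > 0 : μ(A) ≤ ν(A^ε) + ε for all Borel A }`. -/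
noncomputable def levyDist (μ ν : Measure ℝ) : ℝ :=
  sInf {ε : ℝ | 0 < ε ∧ ∀ A : Set ℝ, MeasurableSet A →
    μ A ≤ ν (Metric.thickening ε A) + ENNReal.ofReal ε}

section Dudley

variable (μ ν : Measure ℝ) [IsProbabilityMeasure μ] [IsProbabilityMeasure ν]

lemma dudley_elem_le_two {r : ℝ} (hr : r ∈ {r : ℝ | ∃ (f : ℝ → ℝ) (L C : NNReal),
    LipschitzWith L f ∧ (∀ x, |f x| ≤ C) ∧ (L : ℝ) + (C : ℝ) ≤ 1 ∧
    r = |∫ x, f x ∂μ - ∫ x, f x ∂ν|}) : r ≤ 2 := by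
  obtain ⟨f, L, C, hL, hC, hLC, rfl⟩ := hr
  have hC1 : (C : ℝ) ≤ 1 := le_trans (le_add_of_nonneg_left L.2) hLC
  calc |∫ x, f x ∂μ - ∫ x, f x ∂ν| ≤ |∫ x, f x ∂μ| + |∫ x, f x ∂ν| := abs_sub _ _
    _ ≤ C + C := add_le_add (aux_abs_int hC) (aux_abs_int hC)
    _ ≤ 2 := by linarith

lemma dudley_bddAbove : BddAbove {r : ℝ | ∃ (f : ℝ → ℝ) (L C : NNReal),
    LipschitzWith L f ∧ (∀ x, |f x| ≤ C) ∧ (L : ℝ) + (C : ℝ) ≤ 1 ∧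
    r = |∫ x, f x ∂μ - ∫ x, f x ∂ν|} :=
  ⟨2, fun _ hr => dudley_elem_le_two μ ν hr⟩

lemma dudley_le_two : dudleyDist μ ν ≤ 2 :=
  Real.sSup_le (fun _ hr => dudley_elem_le_two μ ν hr) (by norm_num)

lemma dudley_nonneg : 0 ≤ dudleyDist μ ν := by
  apply le_csSup (dudley_bddAbove μ ν)
  refine ⟨fun _ => 0, 0, 0, LipschitzWith.const' 0, by simp, by simp, by simp⟩

lemma dudley_hat {ε : ℝ} (hε0 : 0 < ε) (A : Set ℝ) (hA : MeasurableSet A) :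
    (μ A).toReal ≤ (ν (thickening ε A)).toReal + (1 + ε) / ε * dudleyDist μ ν := by
  rcases A.eq_empty_or_nonempty with rfl | hAne
  · simp only [measure_empty, ENNReal.toReal_zero]
    exact add_nonneg ENNReal.toReal_nonneg
      (mul_nonneg (by positivity) (dudley_nonneg μ ν))
  · set c : ℝ := ε / (1 + ε) with hc_def
    have h1ε : (0:ℝ) < 1 + ε := by linarith
    have hc0 : (0:ℝ) < c := by positivity
    set φ : ℝ → ℝ := fun x => c * max (1 - infDist x A / ε) 0 with hφ_def
    have hφ_nn : ∀ x, 0 ≤ φ x := fun x => mul_nonneg hc0.le (le_max_right _ _)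
    have hφ_le : ∀ x, φ x ≤ c := by
      intro x
      have hd : 0 ≤ infDist x A / ε := div_nonneg infDist_nonneg hε0.le
      have h1 : max (1 - infDist x A / ε) 0 ≤ 1 := max_le (by linarith) zero_le_one
      calc φ x = c * max (1 - infDist x A / ε) 0 := rfl
        _ ≤ c * 1 := mul_le_mul_of_nonneg_left h1 hc0.le
        _ = c := mul_one c
    set K : NNReal := Real.toNNReal (1 / (1 + ε)) with hK_def
    set C : NNReal := Real.toNNReal c with hC_def
    have hKc : (K : ℝ) = 1 / (1 + ε) := Real.coe_toNNReal _ (by positivity)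
    have hCc : (C : ℝ) = c := Real.coe_toNNReal _ hc0.le
    have hK : LipschitzWith K φ := by
      apply LipschitzWith.of_dist_le_mul
      intro x y
      rw [Real.dist_eq, hKc]
      have h2 : |φ x - φ y|
          = c * |max (1 - infDist x A / ε) 0 - max (1 - infDist y A / ε) 0| := by
        rw [hφ_def]; rw [← mul_sub, abs_mul, abs_of_nonneg hc0.le]
      have h3 : |max (1 - infDist x A / ε) 0 - max (1 - infDist y A / ε) 0|
          ≤ |(1 - infDist x A / ε) - (1 - infDist y A / ε)| := abs_max_sub_max_le_abs _ _ _
      have h4 : |(1 - infDist x A / ε) - (1 - infDist y A / ε)|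
          = |infDist y A - infDist x A| / ε := by
        have h4' : (1 - infDist x A / ε) - (1 - infDist y A / ε)
            = (infDist y A - infDist x A) / ε := by ring
        rw [h4', abs_div, abs_of_pos hε0]
      have h5 : |infDist y A - infDist x A| ≤ dist x y := by
        have := (lipschitz_infDist_pt A).dist_le_mul y x
        rw [Real.dist_eq, NNReal.coe_one, one_mul, dist_comm y x] at this
        exact this
      have h6 : |max (1 - infDist x A / ε) 0 - max (1 - infDist y A / ε) 0| ≤ dist x y / ε := by
        refine h3.trans ?_
        rw [h4]
        gcongr
      calc |φ x - φ y| = c * _ := h2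
        _ ≤ c * (dist x y / ε) := mul_le_mul_of_nonneg_left h6 hc0.le
        _ = 1 / (1 + ε) * dist x y := by rw [hc_def]; field_simp
    have hC : ∀ x, |φ x| ≤ C := fun x => by
      rw [hCc, abs_of_nonneg (hφ_nn x)]; exact hφ_le x
    have hsum : (K : ℝ) + (C : ℝ) ≤ 1 := by
      rw [hKc, hCc, hc_def]
      rw [← add_div, div_self h1ε.ne']
    have hmem : |(∫ x, φ x ∂μ) - ∫ x, φ x ∂ν| ≤ dudleyDist μ ν :=
      le_csSup (dudley_bddAbove μ ν) ⟨φ, K, C, hK, hC, hsum, rfl⟩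
    have hφabs : ∀ x, |φ x| ≤ c := fun x => by
      rw [abs_of_nonneg (hφ_nn x)]; exact hφ_le x
    have intφμ : Integrable φ μ := aux_int hK.continuous hφabs
    have intφν : Integrable φ ν := aux_int hK.continuous hφabs
    have lower : c * (μ A).toReal ≤ ∫ x, φ x ∂μ := by
      have hind : ∀ x, A.indicator (fun _ => c) x ≤ φ x := by
        intro x
        by_cases hx : x ∈ A
        · rw [indicator_of_mem hx]
          have h0 : infDist x A = 0 := infDist_zero_of_mem hx
          simp [hφ_def, h0]
        · rw [indicator_of_notMem hx]; exact hφ_nn x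
      have := integral_mono ((integrable_const c).indicator hA) intφμ hind
      rwa [integral_indicator_const c hA, smul_eq_mul, mul_comm] at this
    have upper : ∫ x, φ x ∂ν ≤ c * (ν (thickening ε A)).toReal := by
      have hT : MeasurableSet (thickening ε A) := isOpen_thickening.measurableSet
      have hind : ∀ x, φ x ≤ (thickening ε A).indicator (fun _ => c) x := by
        intro x
        by_cases hx : x ∈ thickening ε A
        · rw [indicator_of_mem hx]; exact hφ_le x
        · rw [indicator_of_notMem hx]
          have hge : ε ≤ infDist x A :=
            le_of_not_gt (fun hlt => hx ((mem_thickening_iff_infDist_lt hAne).mpr hlt))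
          have hneg : 1 - infDist x A / ε ≤ 0 := by
            rw [sub_nonpos, le_div_iff₀ hε0]; linarith
          show c * max (1 - infDist x A / ε) 0 ≤ 0
          rw [max_eq_right hneg, mul_zero]
      have := integral_mono intφν ((integrable_const c).indicator hT) hind
      rwa [integral_indicator_const c hT, smul_eq_mul, mul_comm] at this
    have habs := (abs_sub_le_iff.mp hmem).1
    have final : c * (μ A).toReal
        ≤ c * (ν (thickening ε A)).toReal + dudleyDist μ ν := by linarith
    have hdiv : (μ A).toReal - (ν (thickening ε A)).toReal ≤ dudleyDist μ ν / c := by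
      rw [le_div_iff₀ hc0]; nlinarith [final]
    have hdc : dudleyDist μ ν / c = (1 + ε) / ε * dudleyDist μ ν := by
      rw [hc_def, div_div_eq_mul_div, div_mul_eq_mul_div, mul_comm]
    linarith [hdc ▸ hdiv]

lemma levy_mem {ε : ℝ} (hε0 : 0 < ε) (h : (1 + ε) / ε * dudleyDist μ ν ≤ ε) :
    ε ∈ {ε : ℝ | 0 < ε ∧ ∀ A : Set ℝ, MeasurableSet A →
      μ A ≤ ν (Metric.thickening ε A) + ENNReal.ofReal ε} := by
  refine ⟨hε0, fun A hA => toENN hε0 ?_⟩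
  have := dudley_hat μ ν hε0 A hA
  linarith

end Dudley

theorem dudley_levy_comparison (μ ν : Measure ℝ)
    [IsProbabilityMeasure μ] [IsProbabilityMeasure ν] :
    (1 / 2) * dudleyDist μ ν ≤ levyDist μ ν ∧
      levyDist μ ν ≤ 2 * Real.sqrt (dudleyDist μ ν) := by
  have hbddBelow : BddBelow {ε : ℝ | 0 < ε ∧ ∀ A : Set ℝ, MeasurableSet A →
      μ A ≤ ν (Metric.thickening ε A) + ENNReal.ofReal ε} :=
    ⟨0, fun x hx => hx.1.le⟩
  constructor
  · -- (1/2) * D ≤ L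
    rw [levyDist]
    apply le_csInf
    · refine ⟨2, by norm_num, fun A hA => ?_⟩
      calc μ A ≤ 1 := prob_le_one
        _ ≤ ENNReal.ofReal 2 := by
            rw [ENNReal.one_le_ofReal]; norm_num
        _ ≤ ν (Metric.thickening 2 A) + ENNReal.ofReal 2 := le_add_self
    · rintro ε ⟨hε0, hε⟩
      have hD : dudleyDist μ ν ≤ 2 * ε := by
        rw [dudleyDist]
        apply Real.sSup_le _ (by positivity)
        rintro r ⟨f, L, C, hL, hC, hLC, rfl⟩
        have hC1 : (C : ℝ) ≤ 1 := le_trans (le_add_of_nonneg_left L.2) hLC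
        have h1 := oneSided μ ν hε0 hε f L C hL hC
        have h2 := oneSided ν μ hε0 (levy_symm μ ν hε0 hε) f L C hL hC
        have hcoef : ((L:ℝ) + 2 * C) * ε ≤ 2 * ε := by nlinarith [hε0.le]
        rw [abs_sub_le_iff]
        exact ⟨h1.trans hcoef, h2.trans hcoef⟩
      linarith
  · -- L ≤ 2 √D
    rcases eq_or_lt_of_le (dudley_nonneg μ ν) with hD0 | hD0
    · have hmem : ∀ δ : ℝ, 0 < δ → levyDist μ ν ≤ δ := by
        intro δ hδ
        apply csInf_le hbddBelow
        apply levy_mem μ ν hδ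
        rw [← hD0, mul_zero]
        exact hδ.le
      have hL0 : levyDist μ ν ≤ 0 := by
        apply le_of_forall_pos_le_add
        intro δ hδ
        rw [zero_add]
        exact hmem δ hδ
      have : 0 ≤ 2 * Real.sqrt (dudleyDist μ ν) := by positivity
      linarith
    · set s := Real.sqrt (dudleyDist μ ν) with hs_def
      have hs0 : 0 < s := Real.sqrt_pos.mpr hD0
      have hs2 : s ^ 2 = dudleyDist μ ν := Real.sq_sqrt (dudley_nonneg μ ν)
      have hD2 : dudleyDist μ ν ≤ 2 := dudley_le_two μ ν
      have hs32 : s ≤ 3 / 2 := by nlinarith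
      apply csInf_le hbddBelow
      apply levy_mem μ ν (by positivity)
      rw [div_mul_eq_mul_div, div_le_iff₀ (by positivity)]
      nlinarith
end

section
/- Let μ be a compactly supported probability measure on ℝ with right edge r(μ) and Stieltjes transform inverse K_μ. Define f(θ) = x − 2θ − K_μ(2θ) for θ in the interval ((1/2)G, (1/2)G_μ(r(μ))) for some G > 0 with G < G_μ(r(μ)), where x is a fixed real number. Then f is strictly concave: its second derivative equals −8 · (∫ dμ(t)/(K_μ(2θ)−t)²)^{−3} · (∫ dμ(t)/(K_μ(2θ)−t)³) < 0. -/
open MeasureTheory Set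

namespace FConcaveAux

lemma ae_le_r {μ : Measure ℝ} {r : ℝ} (hsupp : μ (Set.Iic r)ᶜ = 0) : ∀ᵐ t ∂μ, t ≤ r := by
  have h : (Set.Iic r)ᶜ = {t : ℝ | ¬ t ≤ r} := by ext t; simp
  rw [ae_iff, ← h, hsupp]

lemma aemeas (μ : Measure ℝ) (y : ℝ) (k : ℕ) :
    AEStronglyMeasurable (fun t : ℝ => ((y - t) ^ k)⁻¹) μ :=
  (((measurable_const.sub measurable_id).pow_const k).inv).aestronglyMeasurable

lemma integ {μ : Measure ℝ} [IsProbabilityMeasure μ] {r : ℝ} (hsupp : μ (Set.Iic r)ᶜ = 0)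
    {y : ℝ} (hy : r < y) (k : ℕ) :
    Integrable (fun t : ℝ => ((y - t) ^ k)⁻¹) μ := by
  apply Integrable.mono' (integrable_const (((y - r) ^ k)⁻¹)) (aemeas μ y k)
  filter_upwards [ae_le_r hsupp] with t ht
  have h1 : (0:ℝ) < y - r := by linarith
  have h2 : (0:ℝ) < y - t := by linarith
  rw [Real.norm_eq_abs, abs_inv, abs_pow, abs_of_pos h2]
  exact inv_anti₀ (pow_pos h1 k) (pow_le_pow_left₀ h1.le (by linarith) k)

lemma integ_pos {μ : Measure ℝ} [IsProbabilityMeasure μ] {r : ℝ} (hsupp : μ (Set.Iic r)ᶜ = 0)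
    {y : ℝ} (hy : r < y) (k : ℕ) :
    0 < ∫ t, ((y - t) ^ k)⁻¹ ∂μ := by
  have hnn : 0 ≤ᵐ[μ] fun t : ℝ => ((y - t) ^ k)⁻¹ := by
    filter_upwards [ae_le_r hsupp] with t ht
    have : (0:ℝ) < y - t := by linarith
    positivity
  rw [integral_pos_iff_support_of_nonneg_ae hnn (integ hsupp hy k)]
  have h1 : Set.Iic r ⊆ Function.support fun t : ℝ => ((y - t) ^ k)⁻¹ := by
    intro t ht
    simp only [Set.mem_Iic] at ht
    have : (0:ℝ) < y - t := by linarith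
    simp only [Function.mem_support]
    positivity
  have h2 : μ (Set.Iic r) = 1 := by
    have := measure_add_measure_compl (μ := μ) (measurableSet_Iic (a := r))
    rw [hsupp, add_zero] at this
    rw [this]; exact measure_univ
  calc (0:ENNReal) < 1 := by norm_num
    _ = μ (Set.Iic r) := h2.symm
    _ ≤ _ := measure_mono h1

lemma hasDeriv_pt {t y : ℝ} (hne : t < y) (k : ℕ) :
    HasDerivAt (fun y : ℝ => ((y - t) ^ k)⁻¹) (-(k:ℝ) * ((y - t) ^ (k+1))⁻¹) y := by
  have hne' : y - t ≠ 0 := by linarith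
  have h1 : HasDerivAt (fun z : ℝ => z ^ (-(k:ℤ))) (↑(-(k:ℤ)) * (y - t) ^ (-(k:ℤ) - 1)) (y - t) :=
    hasDerivAt_zpow _ _ (Or.inl hne')
  have h2 := h1.comp y ((hasDerivAt_id y).sub_const t)
  simp only [Function.comp_def, mul_one] at h2
  have e1 : (fun y : ℝ => ((y - t) ^ k)⁻¹) = fun y : ℝ => (y - t) ^ (-(k:ℤ)) := by
    funext z; rw [zpow_neg, zpow_natCast]
  have e2 : (-(k:ℝ)) * ((y - t) ^ (k+1))⁻¹ = ↑(-(k:ℤ)) * (y - t) ^ (-(k:ℤ) - 1) := by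
    have : (-(k:ℤ) - 1) = -((k+1 : ℕ) : ℤ) := by push_cast; ring
    rw [this, zpow_neg, zpow_natCast]; push_cast; ring
  rw [e1, e2]
  exact h2

lemma hasDeriv_H {μ : Measure ℝ} [IsProbabilityMeasure μ] {r : ℝ} (hsupp : μ (Set.Iic r)ᶜ = 0)
    (k : ℕ) {y0 : ℝ} (hy : r < y0) :
    HasDerivAt (fun y => ∫ t, ((y - t) ^ k)⁻¹ ∂μ)
      (-(k:ℝ) * ∫ t, ((y0 - t) ^ (k+1))⁻¹ ∂μ) y0 := by
  set ε := (y0 - r) / 2 with hε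
  have hε0 : 0 < ε := by simp only [hε]; linarith
  have hball : ∀ y ∈ Metric.ball y0 ε, ∀ t : ℝ, t ≤ r → ε ≤ y - t := by
    intro y hy' t ht
    rw [Metric.mem_ball, Real.dist_eq, abs_sub_lt_iff] at hy'
    simp only [hε] at *; linarith
  have key := hasDerivAt_integral_of_dominated_loc_of_deriv_le (μ := μ)
    (F := fun y t => ((y - t) ^ k)⁻¹) (F' := fun y t => -(k:ℝ) * ((y - t) ^ (k+1))⁻¹)
    (x₀ := y0) (bound := fun _ => (k:ℝ) * ((ε ^ (k+1))⁻¹)) (Metric.ball_mem_nhds y0 hε0)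
    (Filter.Eventually.of_forall fun y => aemeas μ y k)
    (integ hsupp hy k)
    ((aestronglyMeasurable_const.mul (aemeas μ y0 (k+1))))
    ?_ (integrable_const _) ?_
  · have key2 := key.2
    simp only [MeasureTheory.integral_const_mul] at key2
    exact key2
  · filter_upwards [ae_le_r hsupp] with t ht
    intro y hy'
    have h1 := hball y hy' t ht
    rw [norm_mul, Real.norm_eq_abs, Real.norm_eq_abs, abs_neg, abs_inv, abs_pow,
      abs_of_pos (by linarith : (0:ℝ) < y - t), Nat.abs_cast]
    apply mul_le_mul_of_nonneg_left _ (Nat.cast_nonneg k)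
    exact inv_anti₀ (pow_pos hε0 _) (pow_le_pow_left₀ hε0.le h1 _)
  · filter_upwards [ae_le_r hsupp] with t ht
    intro y hy'
    have h1 := hball y hy' t ht
    exact hasDeriv_pt (by linarith) k

end FConcaveAux

noncomputable def FIk (μ : Measure ℝ) (k : ℕ) (y : ℝ) : ℝ := ∫ t, ((y - t) ^ k)⁻¹ ∂μ

theorem f_strictly_concave
    (μ : Measure ℝ) [IsProbabilityMeasure μ]
    (r : ℝ) (hsupp : μ (Set.Iic r)ᶜ = 0)
    (hedge : ∀ r' < r, μ (Set.Ioi r') ≠ 0)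
    (Gr : ℝ) (G : ℝ) (hG : 0 < G) (hGGr : G < Gr)
    (K : ℝ → ℝ)
    (hK : ∀ s : ℝ, 0 < s → s < Gr → r < K s ∧ (∫ t, (K s - t)⁻¹ ∂μ) = s)
    (x : ℝ) (f : ℝ → ℝ) (hf : ∀ θ, f θ = x - 2 * θ - K (2 * θ)) :
    (∀ θ ∈ Set.Ioo (G / 2) (Gr / 2),
      deriv (deriv f) θ =
        -8 * (∫ t, ((K (2 * θ) - t) ^ 3)⁻¹ ∂μ) /
          (∫ t, ((K (2 * θ) - t) ^ 2)⁻¹ ∂μ) ^ 3 ∧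
      deriv (deriv f) θ < 0) ∧
    StrictConcaveOn ℝ (Set.Ioo (G / 2) (Gr / 2)) f := by
  have hKr : ∀ s ∈ Set.Ioo (0:ℝ) Gr, r < K s := fun s hs => (hK s hs.1 hs.2).1
  have hGK : ∀ s ∈ Set.Ioo (0:ℝ) Gr, FIk μ 1 (K s) = s := by
    intro s hs
    have h := (hK s hs.1 hs.2).2
    simpa [FIk, pow_one] using h
  have hH : ∀ k : ℕ, ∀ y, r < y → HasDerivAt (FIk μ k) (-(k:ℝ) * FIk μ (k+1) y) y :=
    fun k y hy => FConcaveAux.hasDeriv_H hsupp k hy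
  have hIpos : ∀ k : ℕ, ∀ y, r < y → 0 < FIk μ k y :=
    fun k y hy => FConcaveAux.integ_pos hsupp hy k
  have hanti : StrictAntiOn (FIk μ 1) (Set.Ioi r) := by
    apply strictAntiOn_of_deriv_neg (convex_Ioi r)
    · intro y hy; exact (hH 1 y hy).continuousAt.continuousWithinAt
    · intro y hy
      rw [interior_Ioi] at hy
      rw [(hH 1 y hy).deriv]
      have h2 := hIpos 2 y hy
      have : ((1:ℕ):ℝ) = 1 := by norm_num
      rw [this]
      nlinarith
  -- continuity of K
  have hKcont : ∀ s0 ∈ Set.Ioo (0:ℝ) Gr, ContinuousAt K s0 := by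
    intro s0 hs0
    have hs01 := hs0.1
    have hs02 := hs0.2
    rw [Metric.continuousAt_iff]
    intro ε hε
    set ε' := min ε ((K s0 - r)/2) with hε'def
    have hKs0 : r < K s0 := hKr s0 hs0
    have hε'0 : 0 < ε' := lt_min hε (by linarith)
    have hε'le : ε' ≤ (K s0 - r)/2 := min_le_right _ _
    have hε'ε : ε' ≤ ε := min_le_left _ _
    have hε'r : r < K s0 - ε' := by linarith
    have hmemp : K s0 + ε' ∈ Set.Ioi r := by simp only [Set.mem_Ioi]; linarith
    have hmemm : K s0 - ε' ∈ Set.Ioi r := hε'r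
    have hmem0 : K s0 ∈ Set.Ioi r := hKs0
    have ha : FIk μ 1 (K s0 + ε') < s0 := by
      have h := hanti hmem0 hmemp (by linarith)
      rwa [hGK s0 hs0] at h
    have hb : s0 < FIk μ 1 (K s0 - ε') := by
      have h := hanti hmemm hmem0 (by linarith)
      rwa [hGK s0 hs0] at h
    refine ⟨min (min (s0 - FIk μ 1 (K s0 + ε')) (FIk μ 1 (K s0 - ε') - s0))
      (min s0 (Gr - s0)),
      lt_min (lt_min (by linarith) (by linarith)) (lt_min hs0.1 (by linarith)), ?_⟩
    intro s hdist
    rw [Real.dist_eq, abs_sub_lt_iff] at hdist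
    obtain ⟨hd1, hd2⟩ := hdist
    have hm1 : min (min (s0 - FIk μ 1 (K s0 + ε')) (FIk μ 1 (K s0 - ε') - s0))
        (min s0 (Gr - s0)) ≤ s0 - FIk μ 1 (K s0 + ε') :=
      le_trans (min_le_left _ _) (min_le_left _ _)
    have hm2 : min (min (s0 - FIk μ 1 (K s0 + ε')) (FIk μ 1 (K s0 - ε') - s0))
        (min s0 (Gr - s0)) ≤ FIk μ 1 (K s0 - ε') - s0 :=
      le_trans (min_le_left _ _) (min_le_right _ _)
    have hm3 : min (min (s0 - FIk μ 1 (K s0 + ε')) (FIk μ 1 (K s0 - ε') - s0))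
        (min s0 (Gr - s0)) ≤ s0 :=
      le_trans (min_le_right _ _) (min_le_left _ _)
    have hm4 : min (min (s0 - FIk μ 1 (K s0 + ε')) (FIk μ 1 (K s0 - ε') - s0))
        (min s0 (Gr - s0)) ≤ Gr - s0 :=
      le_trans (min_le_right _ _) (min_le_right _ _)
    have hs : s ∈ Set.Ioo (0:ℝ) Gr := ⟨by linarith, by linarith⟩
    have hKs : r < K s := hKr s hs
    have hGs : FIk μ 1 (K s) = s := hGK s hs
    rw [Real.dist_eq, abs_sub_lt_iff]
    constructor
    · by_contra hcon
      push_neg at hcon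
      have hle : K s0 + ε' ≤ K s := by linarith
      have h := hanti.antitoneOn hmemp (show K s ∈ Set.Ioi r from hKs) hle
      rw [hGs] at h
      linarith
    · by_contra hcon
      push_neg at hcon
      have hle : K s ≤ K s0 - ε' := by linarith
      have h := hanti.antitoneOn (show K s ∈ Set.Ioi r from hKs) hmemm hle
      rw [hGs] at h
      linarith
  -- derivative of K
  have hKd : ∀ s0 ∈ Set.Ioo (0:ℝ) Gr, HasDerivAt K (-(FIk μ 2 (K s0)))⁻¹ s0 := by
    intro s0 hs0
    have hr := hKr s0 hs0
    have hGd : HasDerivAt (FIk μ 1) (-(FIk μ 2 (K s0))) (K s0) := by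
      have h := hH 1 (K s0) hr
      norm_num at h
      convert h using 2
    have hne : -(FIk μ 2 (K s0)) ≠ 0 := by
      have := hIpos 2 (K s0) hr; intro hc; nlinarith
    have hev : ∀ᶠ s in nhds s0, FIk μ 1 (K s) = s := by
      filter_upwards [isOpen_Ioo.mem_nhds hs0] with s hs
      exact hGK s hs
    exact HasDerivAt.of_local_left_inverse (hKcont s0 hs0) hGd hne hev
  -- derivative of s ↦ (-(I2(K s)))⁻¹
  have hφd : ∀ s0 ∈ Set.Ioo (0:ℝ) Gr,
      HasDerivAt (fun s => (-(FIk μ 2 (K s)))⁻¹)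
        (2 * FIk μ 3 (K s0) / (FIk μ 2 (K s0)) ^ 3) s0 := by
    intro s0 hs0
    have hr := hKr s0 hs0
    have hI2 := hIpos 2 (K s0) hr
    have h2 : HasDerivAt (FIk μ 2) (-(2 * FIk μ 3 (K s0))) (K s0) := by
      have h := hH 2 (K s0) hr
      norm_num at h
      exact h
    have hc : HasDerivAt (fun s => FIk μ 2 (K s))
        ((-(2 * FIk μ 3 (K s0))) * (-(FIk μ 2 (K s0)))⁻¹) s0 :=
      h2.comp s0 (hKd s0 hs0)
    have hcn := hc.neg
    have hne : -(FIk μ 2 (K s0)) ≠ 0 := by intro hc'; nlinarith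
    have hI2' : FIk μ 2 (K s0) ≠ 0 := ne_of_gt hI2
    have hinv := hcn.inv hne
    refine hinv.congr_deriv ?_
    simp only [Pi.neg_apply]
    field_simp
  -- now f
  set U := Set.Ioo (G/2) (Gr/2) with hU
  have hUopen : IsOpen U := isOpen_Ioo
  have h2θ : ∀ θ ∈ U, 2 * θ ∈ Set.Ioo (0:ℝ) Gr := by
    intro θ hθ
    obtain ⟨h1, h2⟩ := hθ
    exact ⟨by linarith, by linarith⟩
  have hmul : ∀ θ0 : ℝ, HasDerivAt (fun θ : ℝ => 2 * θ) 2 θ0 := by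
    intro θ0
    simpa using (hasDerivAt_id θ0).const_mul 2
  have hfd : ∀ θ0 ∈ U, HasDerivAt f (-2 - (-(FIk μ 2 (K (2 * θ0))))⁻¹ * 2) θ0 := by
    intro θ0 hθ0
    have hKc : HasDerivAt (fun θ => K (2 * θ)) ((-(FIk μ 2 (K (2 * θ0))))⁻¹ * 2) θ0 :=
      (hKd (2 * θ0) (h2θ θ0 hθ0)).comp θ0 (hmul θ0)
    have hfe : f = fun θ => x - 2 * θ - K (2 * θ) := funext hf
    rw [hfe]
    have h := ((hasDerivAt_const θ0 x).sub (hmul θ0)).sub hKc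
    exact h.congr_deriv (by ring)
  have hderivf : Set.EqOn (deriv f) (fun θ => -2 - (-(FIk μ 2 (K (2 * θ))))⁻¹ * 2) U :=
    fun θ hθ => (hfd θ hθ).deriv
  have hmain : ∀ θ ∈ U,
      deriv (deriv f) θ =
        -8 * (∫ t, ((K (2 * θ) - t) ^ 3)⁻¹ ∂μ) /
          (∫ t, ((K (2 * θ) - t) ^ 2)⁻¹ ∂μ) ^ 3 ∧
      deriv (deriv f) θ < 0 := by
    intro θ0 hθ0
    have hr := hKr (2 * θ0) (h2θ θ0 hθ0)
    have hI2 := hIpos 2 (K (2 * θ0)) hr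
    have hI3 := hIpos 3 (K (2 * θ0)) hr
    have hψd : HasDerivAt (fun θ => -2 - (-(FIk μ 2 (K (2 * θ))))⁻¹ * 2)
        (-(2 * FIk μ 3 (K (2 * θ0)) / (FIk μ 2 (K (2 * θ0))) ^ 3 * 2 * 2)) θ0 := by
      have hcomp : HasDerivAt (fun θ => (-(FIk μ 2 (K (2 * θ))))⁻¹)
          (2 * FIk μ 3 (K (2 * θ0)) / (FIk μ 2 (K (2 * θ0))) ^ 3 * 2) θ0 :=
        (hφd (2 * θ0) (h2θ θ0 hθ0)).comp θ0 (hmul θ0)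
      have h := (hasDerivAt_const θ0 (-2:ℝ)).sub (hcomp.mul_const 2)
      exact h.congr_deriv (by ring)
    have heq : deriv (deriv f) θ0 =
        -(2 * FIk μ 3 (K (2 * θ0)) / (FIk μ 2 (K (2 * θ0))) ^ 3 * 2 * 2) := by
      have hev : deriv f =ᶠ[nhds θ0] (fun θ => -2 - (-(FIk μ 2 (K (2 * θ))))⁻¹ * 2) :=
        Filter.eventuallyEq_of_mem (hUopen.mem_nhds hθ0) hderivf
      rw [hev.deriv_eq]
      exact hψd.deriv
    have hI3e : FIk μ 3 (K (2 * θ0)) = ∫ t, ((K (2 * θ0) - t) ^ 3)⁻¹ ∂μ := rfl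
    have hI2e : FIk μ 2 (K (2 * θ0)) = ∫ t, ((K (2 * θ0) - t) ^ 2)⁻¹ ∂μ := rfl
    constructor
    · rw [heq, ← hI3e, ← hI2e]
      ring
    · rw [heq]
      have hpos : 0 < 2 * FIk μ 3 (K (2 * θ0)) / (FIk μ 2 (K (2 * θ0))) ^ 3 * 2 * 2 := by
        positivity
      linarith
  refine ⟨hmain, ?_⟩
  apply strictConcaveOn_of_deriv2_neg (convex_Ioo _ _)
  · intro θ hθ
    exact (hfd θ hθ).continuousAt.continuousWithinAt
  · intro θ hθ
    rw [interior_Ioo] at hθ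
    have h : deriv^[2] f θ = deriv (deriv f) θ := rfl
    rw [h]
    exact (hmain θ hθ).2
end
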